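/- The function f(r,t) = r + t − Λ(r,t) for r,t ≥ 0 (extended by +∞ elsewhere), where Λ is the logarithmic mean, is convex, positively 1-homogeneous, and satisfies f(r,t) ≥ (r+t)/2 for all r, t ≥ 0. -/

import Mathlib

open Real

noncomputable def logMean (r t : ℝ) : ℝ :=
  if r = 0 ∨ t = 0 then 0
  else if r = t then r
  else (r - t) / (Real.log r - Real.log t)

noncomputable def f (p : ℝ × ℝ) : ℝ := p.1 + p.2 - logMean p.1 p.2

/-!
The logarithmic mean is the integral of the weighted geometric means,
`Λ(r, t) = ∫₀¹ r ^ s * t ^ (1 - s) ds`. Each weighted geometric mean is positively homogeneous and,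
by weighted AM-GM, superadditive; integrating, so is `Λ`, and it is bounded by the integral of the
weighted arithmetic means, `(r + t) / 2`. Hence `f = r + t - Λ` is positively homogeneous and
subadditive, and such a function is convex.
-/

theorem convexOn_of_map_add_le_of_map_smul {𝕜 E β : Type*} [Semiring 𝕜] [PartialOrder 𝕜]
    [AddCommMonoid E] [SMul 𝕜 E] [AddCommMonoid β] [PartialOrder β] [SMul 𝕜 β]
    {s : Set E} {g : E → β} (hs : Convex 𝕜 s) (hs_smul : ∀ c : 𝕜, 0 ≤ c → ∀ x ∈ s, c • x ∈ s)
    (hg_smul : ∀ c : 𝕜, 0 ≤ c → ∀ x ∈ s, g (c • x) = c • g x)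
    (hg_add : ∀ x ∈ s, ∀ y ∈ s, g (x + y) ≤ g x + g y) : ConvexOn 𝕜 s g := by
  refine ⟨hs, fun x hx y hy a b ha hb _ => ?_⟩
  rw [← hg_smul a ha x hx, ← hg_smul b hb y hy]
  exact hg_add _ (hs_smul a ha x hx) _ (hs_smul b hb y hy)

theorem rpow_mul_rpow_add_rpow_mul_rpow_le {u v x y s : ℝ} (hu : 0 ≤ u) (hv : 0 ≤ v)
    (hx : 0 < x) (hy : 0 < y) (hs₀ : 0 ≤ s) (hs₁ : s ≤ 1) :
    u ^ s * v ^ (1 - s) + x ^ s * y ^ (1 - s) ≤ (u + x) ^ s * (v + y) ^ (1 - s) := by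
  have hux : 0 < u + x := by positivity
  have hvy : 0 < v + y := by positivity
  have h1s : 0 ≤ 1 - s := by linarith
  -- weighted AM-GM for the two normalized points, whose weighted arithmetic means add up to `1`
  have h₁ := geom_mean_le_arith_mean2_weighted hs₀ h1s
    (div_nonneg hu hux.le) (div_nonneg hv hvy.le) (by ring)
  have h₂ := geom_mean_le_arith_mean2_weighted hs₀ h1s
    (div_nonneg hx.le hux.le) (div_nonneg hy.le hvy.le) (by ring)
  have hsum : s * (u / (u + x)) + (1 - s) * (v / (v + y)) +
      (s * (x / (u + x)) + (1 - s) * (y / (v + y))) = 1 := by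
    field_simp
    ring
  have hle : (u / (u + x)) ^ s * (v / (v + y)) ^ (1 - s) +
      (x / (u + x)) ^ s * (y / (v + y)) ^ (1 - s) ≤ 1 := by linarith
  rwa [div_rpow hu hux.le, div_rpow hv hvy.le, div_rpow hx.le hux.le, div_rpow hy.le hvy.le,
    div_mul_div_comm, div_mul_div_comm, ← add_div, div_le_one (by positivity)] at hle

theorem logMean_of_eq_zero_or_eq_zero {r t : ℝ} (h : r = 0 ∨ t = 0) : logMean r t = 0 :=
  if_pos h

theorem intervalIntegrable_rpow_mul_rpow {r t : ℝ} (hr : 0 < r) (ht : 0 < t) :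
    IntervalIntegrable (fun s : ℝ => r ^ s * t ^ (1 - s)) MeasureTheory.volume 0 1 :=
  Continuous.intervalIntegrable (by fun_prop (disch := positivity)) 0 1

theorem logMean_eq_integral {r t : ℝ} (hr : 0 < r) (ht : 0 < t) :
    logMean r t = ∫ s in (0 : ℝ)..1, r ^ s * t ^ (1 - s) := by
  have hexp : ∀ s : ℝ, r ^ s * t ^ (1 - s) = t * exp ((log r - log t) * s) := fun s => by
    rw [rpow_def_of_pos hr, rpow_def_of_pos ht, ← exp_add, ← exp_log ht, ← exp_add, log_exp]
    ring_nf
  simp only [hexp, intervalIntegral.integral_const_mul]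
  rw [logMean, if_neg (by simp [hr.ne', ht.ne'])]
  by_cases hrt : r = t
  · simp [hrt]
  · have ha : log r - log t ≠ 0 := sub_ne_zero.mpr fun h => hrt (log_injOn_pos hr ht h)
    rw [if_neg hrt, intervalIntegral.integral_comp_mul_left (fun s => exp s) ha, integral_exp,
      mul_one, mul_zero, exp_zero, exp_sub, exp_log hr, exp_log ht, smul_eq_mul]
    field_simp

theorem logMean_nonneg {r t : ℝ} (hr : 0 ≤ r) (ht : 0 ≤ t) : 0 ≤ logMean r t := by
  rcases hr.eq_or_lt with rfl | hr
  · simp [logMean]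
  rcases ht.eq_or_lt with rfl | ht
  · simp [logMean]
  rw [logMean_eq_integral hr ht]
  exact intervalIntegral.integral_nonneg zero_le_one fun s _ => by positivity

theorem logMean_mono {r t r' t' : ℝ} (hr : 0 ≤ r) (ht : 0 ≤ t) (hrr' : r ≤ r') (htt' : t ≤ t') :
    logMean r t ≤ logMean r' t' := by
  rcases hr.eq_or_lt with rfl | hr
  · simpa [logMean] using logMean_nonneg hrr' (ht.trans htt')
  rcases ht.eq_or_lt with rfl | ht
  · simpa [logMean] using logMean_nonneg (hr.le.trans hrr') htt'
  have hr' := hr.trans_le hrr'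
  have ht' := ht.trans_le htt'
  rw [logMean_eq_integral hr ht, logMean_eq_integral hr' ht']
  refine intervalIntegral.integral_mono_on zero_le_one (intervalIntegrable_rpow_mul_rpow hr ht)
    (intervalIntegrable_rpow_mul_rpow hr' ht') fun s hs => ?_
  have hs₀ : 0 ≤ s := hs.1
  have hs₁ : 0 ≤ 1 - s := by linarith [hs.2]
  gcongr

theorem logMean_add_logMean_le {r₁ t₁ r₂ t₂ : ℝ} (hr₁ : 0 ≤ r₁) (ht₁ : 0 ≤ t₁) (hr₂ : 0 ≤ r₂)
    (ht₂ : 0 ≤ t₂) : logMean r₁ t₁ + logMean r₂ t₂ ≤ logMean (r₁ + r₂) (t₁ + t₂) := by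
  by_cases h₁ : r₁ = 0 ∨ t₁ = 0
  · rw [logMean_of_eq_zero_or_eq_zero h₁, zero_add]
    exact logMean_mono hr₂ ht₂ (le_add_of_nonneg_left hr₁) (le_add_of_nonneg_left ht₁)
  by_cases h₂ : r₂ = 0 ∨ t₂ = 0
  · rw [logMean_of_eq_zero_or_eq_zero h₂, add_zero]
    exact logMean_mono hr₁ ht₁ (le_add_of_nonneg_right hr₂) (le_add_of_nonneg_right ht₂)
  rw [not_or] at h₁ h₂
  have hr₁' := hr₁.lt_of_ne' h₁.1
  have ht₁' := ht₁.lt_of_ne' h₁.2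
  have hr₂' := hr₂.lt_of_ne' h₂.1
  have ht₂' := ht₂.lt_of_ne' h₂.2
  have hi₁ := intervalIntegrable_rpow_mul_rpow hr₁' ht₁'
  have hi₂ := intervalIntegrable_rpow_mul_rpow hr₂' ht₂'
  rw [logMean_eq_integral hr₁' ht₁', logMean_eq_integral hr₂' ht₂',
    logMean_eq_integral (by positivity) (by positivity), ← intervalIntegral.integral_add hi₁ hi₂]
  exact intervalIntegral.integral_mono_on zero_le_one (hi₁.add hi₂)
    (intervalIntegrable_rpow_mul_rpow (by positivity) (by positivity)) fun s hs =>
      rpow_mul_rpow_add_rpow_mul_rpow_le hr₁ ht₁ hr₂' ht₂' hs.1 hs.2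

theorem logMean_mul_mul {c r t : ℝ} (hc : 0 ≤ c) (hr : 0 ≤ r) (ht : 0 ≤ t) :
    logMean (c * r) (c * t) = c * logMean r t := by
  by_cases h : c = 0 ∨ r = 0 ∨ t = 0
  · rcases h with rfl | rfl | rfl <;> simp [logMean]
  simp only [not_or] at h
  have hc' := hc.lt_of_ne' h.1
  have hr' := hr.lt_of_ne' h.2.1
  have ht' := ht.lt_of_ne' h.2.2
  rw [logMean_eq_integral (by positivity) (by positivity), logMean_eq_integral hr' ht',
    ← intervalIntegral.integral_const_mul]
  refine intervalIntegral.integral_congr fun s _ => ?_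
  rw [mul_rpow hc hr, mul_rpow hc ht, mul_mul_mul_comm, ← rpow_add hc', add_sub_cancel, rpow_one]

theorem logMean_le_add_div_two {r t : ℝ} (hr : 0 ≤ r) (ht : 0 ≤ t) :
    logMean r t ≤ (r + t) / 2 := by
  by_cases h : r = 0 ∨ t = 0
  · rw [logMean_of_eq_zero_or_eq_zero h]
    positivity
  rw [not_or] at h
  have hr' := hr.lt_of_ne' h.1
  have ht' := ht.lt_of_ne' h.2
  have hmean : ∫ s in (0 : ℝ)..1, (s * r + (1 - s) * t) = (r + t) / 2 := by
    rw [intervalIntegral.integral_add (Continuous.intervalIntegrable (by fun_prop) _ _)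
      (Continuous.intervalIntegrable (by fun_prop) _ _), intervalIntegral.integral_mul_const,
      intervalIntegral.integral_mul_const, intervalIntegral.integral_comp_sub_left (fun s => s),
      integral_id, integral_id]
    ring
  rw [logMean_eq_integral hr' ht', ← hmean]
  exact intervalIntegral.integral_mono_on zero_le_one (intervalIntegrable_rpow_mul_rpow hr' ht')
    (Continuous.intervalIntegrable (by fun_prop) 0 1) fun s hs =>
      geom_mean_le_arith_mean2_weighted hs.1 (by linarith [hs.2]) hr ht (by ring)

theorem f_smul {c : ℝ} (hc : 0 ≤ c) {p : ℝ × ℝ} (hp₁ : 0 ≤ p.1) (hp₂ : 0 ≤ p.2) :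
    f (c • p) = c * f p := by
  simp only [f, Prod.smul_fst, Prod.smul_snd, smul_eq_mul, logMean_mul_mul hc hp₁ hp₂]
  ring

theorem f_add_le {p q : ℝ × ℝ} (hp₁ : 0 ≤ p.1) (hp₂ : 0 ≤ p.2) (hq₁ : 0 ≤ q.1) (hq₂ : 0 ≤ q.2) :
    f (p + q) ≤ f p + f q := by
  have := logMean_add_logMean_le hp₁ hp₂ hq₁ hq₂
  simp only [f, Prod.fst_add, Prod.snd_add]
  linarith

theorem f_convex_homogeneous_bound :
    ConvexOn ℝ {p : ℝ × ℝ | 0 ≤ p.1 ∧ 0 ≤ p.2} f ∧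
    (∀ c : ℝ, 0 ≤ c → ∀ p : ℝ × ℝ, 0 ≤ p.1 → 0 ≤ p.2 → f (c • p) = c * f p) ∧
    (∀ p : ℝ × ℝ, 0 ≤ p.1 → 0 ≤ p.2 → (p.1 + p.2) / 2 ≤ f p) := by
  refine ⟨convexOn_of_map_add_le_of_map_smul ?_ ?_ ?_ ?_, fun c hc p hp₁ hp₂ => f_smul hc hp₁ hp₂,
    fun p hp₁ hp₂ => ?_⟩
  · exact convex_Ici (0 : ℝ × ℝ)
  · exact fun c hc p hp => ⟨mul_nonneg hc hp.1, mul_nonneg hc hp.2⟩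
  · exact fun c hc p hp => f_smul hc hp.1 hp.2
  · exact fun p hp q hq => f_add_le hp.1 hp.2 hq.1 hq.2
  · have := logMean_le_add_div_two hp₁ hp₂
    simp only [f]
    linarith
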